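/- Let $(\Omega,\mu)$ be a $\sigma$-finite measure space, $G$ a group acting on $\Omega$ by measurable bijections $\alpha_g$ preserving the equivalence class of $\mu$, with the induced isometries $(T_gf)(x)=f(\alpha_g^{-1}(x))$ on $L^\infty_\mu(\Omega)$ (scalar case $E=\mathbb{C}$). If the action of $G$ is metrically free, then for every finite set $F\subset G$ and coefficients $a_g\in L^\infty_\mu(\Omega)$ (acting by multiplication), $\big\|\sum_{g\in F}a_gT_g\big\|_{L(L^\infty_\mu(\Omega))} = \operatorname{esssup}_{x\in\Omega}\sum_{g\in F}|a_g(x)|$. -/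

import Mathlib

/-!
The bound `‖∑ a_g T_g‖ ≤ esssup ∑ |a_g|` is the pointwise triangle inequality. For the converse,
take `t` below the essential supremum and a set `Δ` of positive measure on which `∑ |a_g| > t`.
Metric freeness shrinks `Δ` so that the sets `α_g⁻¹ Δ`, `g ∈ F`, are almost disjoint, so a
function `f` with `‖f‖_∞ ≤ 1` can be prescribed independently on each of them. Choosing
`f (α_g⁻¹ x) = conj (a_g x) / |a_g x|` for `x ∈ Δ` gives `(∑ a_g T_g f) x = ∑ |a_g x| > t` on `Δ`.
-/

open MeasureTheory
open scoped ENNReal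

def MetricallyFree {Ω : Type*} [MeasurableSpace Ω] (μ : Measure Ω)
    {G : Type*} (α : G → Ω → Ω) : Prop :=
  ∀ (S : Finset G) (Δ : Set Ω), MeasurableSet Δ → 0 < μ Δ →
    ∃ Δ' : Set Ω, MeasurableSet Δ' ∧ Δ' ⊆ Δ ∧ 0 < μ Δ' ∧
      ∀ g ∈ S, ∀ h ∈ S, g ≠ h → μ (α g '' Δ' ∩ α h '' Δ') = 0

open Filter Function
open scoped ComplexConjugate

namespace RCLike

variable {𝕜 : Type*} [RCLike 𝕜]

lemma conj_div_norm_mul_self (z : 𝕜) : conj z / ‖z‖ * z = ‖z‖ := by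
  rcases eq_or_ne z 0 with rfl | hz
  · simp
  · have hz' : (‖z‖ : 𝕜) ≠ 0 := ofReal_ne_zero.2 (norm_ne_zero_iff.2 hz)
    rw [div_mul_eq_mul_div, conj_mul, sq, mul_div_assoc, div_self hz', mul_one]

lemma norm_conj_div_norm_le_one (z : 𝕜) : ‖conj z / ‖z‖‖ ≤ 1 := by
  rw [norm_div, norm_conj, norm_ofReal, abs_norm]
  exact div_self_le_one _

end RCLike

namespace MeasureTheory

variable {Ω E : Type*} [MeasurableSpace Ω] {μ : Measure Ω} [NormedAddCommGroup E]

lemma lpNorm_exponent_top_le_of_ae_bound {f : Ω → E} {C : ℝ} (hC : 0 ≤ C)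
    (h : ∀ᵐ x ∂μ, ‖f x‖ ≤ C) : lpNorm f ∞ μ ≤ C := by
  by_cases hf : AEStronglyMeasurable f μ
  · rw [← toReal_eLpNorm hf, eLpNorm_exponent_top]
    exact ENNReal.toReal_le_of_le_ofReal hC (eLpNormEssSup_le_of_ae_bound h)
  · rwa [lpNorm_of_not_aestronglyMeasurable hf]

lemma measure_lt_norm_ne_zero_of_lt_lpNorm {f : Ω → E} {t : ℝ} (ht₀ : 0 ≤ t)
    (ht : t < lpNorm f ∞ μ) : μ {x | t < ‖f x‖} ≠ 0 := by
  intro h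
  refine ht.not_ge (lpNorm_exponent_top_le_of_ae_bound ht₀ ?_)
  filter_upwards [measure_eq_zero_iff_ae_notMem.1 h] with x hx using not_lt.1 hx

namespace Lp

lemma norm_eq_lpNorm {p : ℝ≥0∞} (f : Lp E p μ) : ‖f‖ = lpNorm f p μ := by
  rw [Lp.norm_def, toReal_eLpNorm (Lp.aestronglyMeasurable f)]

lemma ae_norm_le_norm_top (f : Lp E ∞ μ) : ∀ᵐ x ∂μ, ‖f x‖ ≤ ‖f‖ :=
  norm_eq_lpNorm f ▸ ae_le_lpNorm_exponent_top (Lp.memLp f)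

lemma norm_top_le_of_ae_bound {f : Lp E ∞ μ} {C : ℝ} (hC : 0 ≤ C)
    (h : ∀ᵐ x ∂μ, ‖f x‖ ≤ C) : ‖f‖ ≤ C :=
  norm_eq_lpNorm f ▸ lpNorm_exponent_top_le_of_ae_bound hC h

lemma le_norm_top_of_measure_ne_zero {f : Lp E ∞ μ} {s : Set Ω} {t : ℝ} (hs : μ s ≠ 0)
    (h : ∀ᵐ x ∂μ, x ∈ s → t ≤ ‖f x‖) : t ≤ ‖f‖ := by
  by_contra! hlt
  refine hs (measure_eq_zero_iff_ae_notMem.2 ?_)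
  filter_upwards [h, ae_norm_le_norm_top f] with x hx hfx hxs
  exact (hx hxs).not_gt (hfx.trans_lt hlt)

lemma coeFn_finset_sum {ι : Type*} {p : ℝ≥0∞} (s : Finset ι) (f : ι → Lp E p μ) :
    ⇑(∑ i ∈ s, f i) =ᵐ[μ] fun x => ∑ i ∈ s, f i x := by
  classical
  induction s using Finset.induction_on with
  | empty => simp only [Finset.sum_empty]; exact Lp.coeFn_zero E p μ
  | insert i s hi ih =>
    rw [Finset.sum_insert hi]
    filter_upwards [Lp.coeFn_add (f i) (∑ j ∈ s, f j), ih] with x hadd hsum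
    rw [hadd, Pi.add_apply, hsum, Finset.sum_insert hi]

end Lp

variable {G : Type*} {e : G → Ω ≃ᵐ Ω} {F : Finset G}

lemma exists_norm_le_one_apply_symm_eq (he : ∀ g, Measure.QuasiMeasurePreserving (e g).symm μ μ)
    {Δ : Set Ω} (hΔ : MeasurableSet Δ)
    (hdisj : (F : Set G).Pairwise (AEDisjoint μ on fun g => (e g).symm '' Δ))
    {c : G → Ω → E} (hc : ∀ g, StronglyMeasurable (c g)) (hc_le : ∀ g x, ‖c g x‖ ≤ 1) :
    ∃ f : Lp E ∞ μ, ‖f‖ ≤ 1 ∧ ∀ g ∈ F, ∀ᵐ x ∂μ, x ∈ Δ → f ((e g).symm x) = c g x := by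
  classical
  set D : G → Set Ω := fun g => (e g).symm '' Δ
  have hD : ∀ g, MeasurableSet (D g) := fun g => (e g).symm.measurableSet_image.2 hΔ
  set φ : Ω → E := fun y => ∑ h ∈ F, (D h).indicator (fun y => c h (e h y)) y
  have hφ_meas : StronglyMeasurable φ := Finset.stronglyMeasurable_fun_sum _ fun h _ =>
    ((hc h).comp_measurable (e h).measurable).indicator (hD h)
  have hφ_eq : ∀ᵐ y ∂μ, ∀ g ∈ F, y ∈ D g → φ y = c g (e g y) := by
    have hsep : ∀ᵐ y ∂μ, ∀ g ∈ F, ∀ h ∈ F, g ≠ h → y ∉ D g ∩ D h := by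
      simp only [Finset.eventually_all, eventually_imp_distrib_left]
      exact fun g hg h hh hgh => measure_eq_zero_iff_ae_notMem.1 (hdisj hg hh hgh)
    filter_upwards [hsep] with y hy g hg hyg
    simp only [φ]
    rw [Finset.sum_eq_single_of_mem g hg fun h hh hhg =>
      Set.indicator_of_notMem (fun hyh => hy g hg h hh hhg.symm ⟨hyg, hyh⟩) _]
    exact Set.indicator_of_mem hyg _
  have hφ_le : ∀ᵐ y ∂μ, ‖φ y‖ ≤ 1 := by
    filter_upwards [hφ_eq] with y hy
    by_cases hyD : ∃ g ∈ F, y ∈ D g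
    · obtain ⟨g, hg, hyg⟩ := hyD
      exact hy g hg hyg ▸ hc_le _ _
    · simp only [not_exists, not_and] at hyD
      simp only [φ, Finset.sum_eq_zero fun h hh => Set.indicator_of_notMem (hyD h hh) _, norm_zero,
        zero_le_one]
  have hφ : MemLp φ ∞ μ := memLp_top_of_bound hφ_meas.aestronglyMeasurable 1 hφ_le
  refine ⟨hφ.toLp φ, Lp.norm_top_le_of_ae_bound zero_le_one ?_, fun g hg => ?_⟩
  · filter_upwards [hφ.coeFn_toLp, hφ_le] with y hy hy_le
    rwa [hy]
  · filter_upwards [(he g).ae_eq_comp hφ.coeFn_toLp, (he g).ae hφ_eq] with x hx hx_eq hxΔ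
    rw [comp_apply, comp_apply] at hx
    rw [hx, hx_eq g hg (Set.mem_image_of_mem _ hxΔ), MeasurableEquiv.apply_symm_apply]

section WeightedSum

variable {𝕜 : Type*} [RCLike 𝕜] {b : G → Ω → 𝕜} {S : Lp 𝕜 ∞ μ →L[𝕜] Lp 𝕜 ∞ μ}

lemma norm_le_lpNorm_sum_norm (he : ∀ g, Measure.QuasiMeasurePreserving (e g).symm μ μ)
    (hb : MemLp (fun x => ∑ g ∈ F, ‖b g x‖) ∞ μ)
    (hS : ∀ f : Lp 𝕜 ∞ μ, S f =ᵐ[μ] fun x => ∑ g ∈ F, b g x * f ((e g).symm x)) :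
    ‖S‖ ≤ lpNorm (fun x => ∑ g ∈ F, ‖b g x‖) ∞ μ := by
  refine S.opNorm_le_bound lpNorm_nonneg fun f => Lp.norm_top_le_of_ae_bound
    (mul_nonneg lpNorm_nonneg (norm_nonneg f)) ?_
  have hf : ∀ᵐ x ∂μ, ∀ g ∈ F, ‖f ((e g).symm x)‖ ≤ ‖f‖ :=
    (Finset.eventually_all F).2 fun g _ => (he g).ae (Lp.ae_norm_le_norm_top f)
  filter_upwards [hS f, hf, ae_le_lpNorm_exponent_top hb] with x hSx hfx hbx
  rw [Real.norm_of_nonneg (by positivity)] at hbx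
  calc ‖S f x‖ ≤ ∑ g ∈ F, ‖b g x‖ * ‖f‖ := by
        rw [hSx]
        refine norm_sum_le_of_le F fun g hg => ?_
        rw [norm_mul]
        gcongr
        exact hfx g hg
    _ = (∑ g ∈ F, ‖b g x‖) * ‖f‖ := (Finset.sum_mul ..).symm
    _ ≤ _ := by gcongr

lemma le_norm_of_measure_lt_sum_norm_ne_zero
    (he : ∀ g, Measure.QuasiMeasurePreserving (e g).symm μ μ)
    (hfree : MetricallyFree μ fun g => ((e g).symm : Ω → Ω)) (hb : ∀ g, Measurable (b g))
    (hS : ∀ f : Lp 𝕜 ∞ μ, S f =ᵐ[μ] fun x => ∑ g ∈ F, b g x * f ((e g).symm x))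
    {t : ℝ} (ht : μ {x | t < ∑ g ∈ F, ‖b g x‖} ≠ 0) : t ≤ ‖S‖ := by
  have hΔ : MeasurableSet {x | t < ∑ g ∈ F, ‖b g x‖} :=
    measurableSet_lt measurable_const (Finset.measurable_sum _ fun g _ => (hb g).norm)
  obtain ⟨Δ, hΔ_meas, hΔ_sub, hΔ_pos, hdisj⟩ := hfree F _ hΔ (pos_iff_ne_zero.2 ht)
  obtain ⟨f, hf_le, hf⟩ := exists_norm_le_one_apply_symm_eq (F := F) he hΔ_meas
    (fun g hg h hh hgh => hdisj g hg h hh hgh)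
    (c := fun g x => conj (b g x) / ‖b g x‖)
    (fun g => ((RCLike.continuous_conj.measurable.comp (hb g)).div
      (RCLike.measurable_ofReal.comp (hb g).norm)).stronglyMeasurable)
    fun g x => RCLike.norm_conj_div_norm_le_one _
  have hSf : t ≤ ‖S f‖ := by
    refine Lp.le_norm_top_of_measure_ne_zero hΔ_pos.ne' ?_
    filter_upwards [hS f, (Finset.eventually_all F).2 hf] with x hSx hfx hxΔ
    have hsum : S f x = ∑ g ∈ F, (‖b g x‖ : 𝕜) := by
      rw [hSx]
      refine Finset.sum_congr rfl fun g hg => ?_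
      rw [hfx g hg hxΔ, mul_comm, RCLike.conj_div_norm_mul_self]
    rw [hsum, ← RCLike.ofReal_sum, RCLike.norm_ofReal, abs_of_nonneg (by positivity)]
    exact (hΔ_sub hxΔ).le
  calc t ≤ ‖S f‖ := hSf
    _ ≤ ‖S‖ * ‖f‖ := S.le_opNorm f
    _ ≤ ‖S‖ := mul_le_of_le_one_right (norm_nonneg S) hf_le

theorem norm_eq_essSup_sum_norm (he : ∀ g, Measure.QuasiMeasurePreserving (e g).symm μ μ)
    (hfree : MetricallyFree μ fun g => ((e g).symm : Ω → Ω)) (hb : ∀ g, Measurable (b g))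
    (hS : ∀ f : Lp 𝕜 ∞ μ, S f =ᵐ[μ] fun x => ∑ g ∈ F, b g x * f ((e g).symm x)) :
    ‖S‖ = essSup (fun x => ∑ g ∈ F, ‖b g x‖) μ := by
  set u : Ω → ℝ := fun x => ∑ g ∈ F, ‖b g x‖
  have hu_nonneg : ∀ x, 0 ≤ u x := fun x => by positivity
  have hu_meas : Measurable u := Finset.measurable_sum _ fun g _ => (hb g).norm
  -- the lower bound already bounds `u` essentially by `‖S‖ + 1`
  have hu : MemLp u ∞ μ := by
    have hnull : μ {x | ‖S‖ + 1 < u x} = 0 := by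
      by_contra h
      linarith [le_norm_of_measure_lt_sum_norm_ne_zero he hfree hb hS h]
    refine memLp_top_of_bound hu_meas.aestronglyMeasurable (‖S‖ + 1) ?_
    filter_upwards [measure_eq_zero_iff_ae_notMem.1 hnull] with x hx
    rw [Real.norm_of_nonneg (hu_nonneg x)]
    exact not_lt.1 hx
  have hnorm : ‖S‖ = lpNorm u ∞ μ := by
    refine le_antisymm (norm_le_lpNorm_sum_norm he hu hS) (le_of_forall_lt_imp_le_of_dense ?_)
    intro t ht
    rcases lt_or_ge t 0 with ht₀ | ht₀
    · exact ht₀.le.trans (norm_nonneg S)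
    refine le_norm_of_measure_lt_sum_norm_ne_zero he hfree hb hS ?_
    simpa only [Real.norm_of_nonneg (hu_nonneg _)] using
      measure_lt_norm_ne_zero_of_lt_lpNorm ht₀ ht
  rw [hnorm, lpNorm_exponent_top_eq_essSup hu]
  simp only [Real.norm_of_nonneg (hu_nonneg _)]

end WeightedSum

end MeasureTheory

lemma MetricallyFree.symm {Ω G : Type*} [MeasurableSpace Ω] {μ : Measure Ω} [Group G]
    {α : G → Ω ≃ᵐ Ω} (hgrp : ∀ g h x, α (g * h) x = α g (α h x))
    (hfree : MetricallyFree μ fun g => (α g : Ω → Ω)) :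
    MetricallyFree μ fun g => ((α g).symm : Ω → Ω) := by
  classical
  have hone : ∀ x, α 1 x = x := fun x => (α 1).injective (by rw [← hgrp, one_mul])
  have hinv : ∀ g, ((α g).symm : Ω → Ω) = α g⁻¹ := fun g => funext fun x => by
    rw [MeasurableEquiv.symm_apply_eq, ← hgrp, mul_inv_cancel, hone]
  intro S Δ hΔ hpos
  obtain ⟨Δ', hΔ', hsub, hpos', hdisj⟩ := hfree (S.image (·⁻¹)) Δ hΔ hpos
  refine ⟨Δ', hΔ', hsub, hpos', fun g hg h hh hgh => ?_⟩
  dsimp only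
  rw [hinv, hinv]
  exact hdisj _ (Finset.mem_image_of_mem _ hg) _ (Finset.mem_image_of_mem _ hh)
    (inv_injective.ne hgh)

theorem stmt6_general {Ω : Type*} [MeasurableSpace Ω] (μ : Measure Ω)
    {G : Type*} [Group G]
    (α : G → Ω ≃ᵐ Ω)
    (hgrp : ∀ g h x, α (g * h) x = α g (α h x))
    (hclass : ∀ g : G, μ.map (α g) ≪ μ ∧ μ ≪ μ.map (α g))
    (hfree : MetricallyFree μ fun g => (α g : Ω → Ω))
    (T : G → (Lp ℂ ⊤ μ ≃ₗᵢ[ℂ] Lp ℂ ⊤ μ))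
    (hT : ∀ (g : G) (f : Lp ℂ ⊤ μ),
      (T g f : Ω → ℂ) =ᵐ[μ] fun x => f ((α g).symm x))
    (F : Finset G) (a : G → Ω → ℂ)
    (Mop : G → (Lp ℂ ⊤ μ →L[ℂ] Lp ℂ ⊤ μ))
    (hMop : ∀ (g : G) (f : Lp ℂ ⊤ μ),
      (Mop g f : Ω → ℂ) =ᵐ[μ] fun x => a g x * f x) :
    ‖∑ g ∈ F, (Mop g).comp
        ((T g).toContinuousLinearEquiv : Lp ℂ ⊤ μ →L[ℂ] Lp ℂ ⊤ μ)‖ =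
      essSup (fun x => ∑ g ∈ F, ‖a g x‖) μ := by
  set S := ∑ g ∈ F, (Mop g).comp
    ((T g).toContinuousLinearEquiv : Lp ℂ ⊤ μ →L[ℂ] Lp ℂ ⊤ μ)
  -- `a` need not be measurable; `b g`, a representative of `Mop g 1`, is.
  set one : Lp ℂ ⊤ μ := (memLp_top_const (1 : ℂ)).toLp _
  set b : G → Ω → ℂ := fun g => Mop g one
  have hab : ∀ g, a g =ᵐ[μ] b g := fun g => by
    filter_upwards [hMop g one, (memLp_top_const (1 : ℂ)).coeFn_toLp] with x hMx h1
    rw [show b g x = Mop g one x from rfl, hMx, h1, mul_one]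
  have he : ∀ g, Measure.QuasiMeasurePreserving (α g).symm μ μ := fun g =>
    ((α g).quasiMeasurePreserving_symm μ).mono_left (hclass g).2
  have hS : ∀ f, S f =ᵐ[μ] fun x => ∑ g ∈ F, b g x * f ((α g).symm x) := fun f => by
    have hterm : ∀ᵐ x ∂μ, ∀ g ∈ F, Mop g (T g f) x = b g x * f ((α g).symm x) :=
      (Finset.eventually_all F).2 fun g _ => by
        filter_upwards [hMop g _, hT g f, hab g] with x hMx hTx habx
        rw [hMx, hTx, habx]
    filter_upwards [Lp.coeFn_finset_sum F fun g => Mop g (T g f), hterm] with x hsum hx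
    simp only [S, sum_apply, ContinuousLinearMap.comp_apply, ContinuousLinearEquiv.coe_coe,
      LinearIsometryEquiv.coe_toContinuousLinearEquiv, hsum]
    exact Finset.sum_congr rfl hx
  have hab_sum : (fun x => ∑ g ∈ F, ‖a g x‖) =ᵐ[μ] fun x => ∑ g ∈ F, ‖b g x‖ := by
    filter_upwards [(Finset.eventually_all F).2 fun g _ => hab g] with x hx
    exact Finset.sum_congr rfl fun g hg => by rw [hx g hg]
  rw [essSup_congr_ae hab_sum]
  exact norm_eq_essSup_sum_norm he (hfree.symm hgrp)
    (fun g => (Lp.stronglyMeasurable _).measurable) hS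

/-- Scalar case `E = ℂ`: `(Ω, μ)` σ-finite, `G` acting by measurable
bijections `α g` preserving the measure class, `(T_g f)(x) = f(α_g⁻¹ x)` on `L^∞_μ(Ω)`,
`Mop g` multiplication by `a g ∈ L^∞_μ(Ω)`.  If the action is metrically free then
`‖∑_{g∈F} a_g T_g‖ = esssup_x ∑_{g∈F} |a_g(x)|`. -/
theorem stmt6 {Ω : Type*} [MeasurableSpace Ω] (μ : Measure Ω) [SigmaFinite μ]
    {G : Type*} [Group G]
    (α : G → Ω ≃ᵐ Ω)
    (hgrp : ∀ g h x, α (g * h) x = α g (α h x))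
    (hclass : ∀ g : G, μ.map (α g) ≪ μ ∧ μ ≪ μ.map (α g))
    (hfree : MetricallyFree μ fun g => (α g : Ω → Ω))
    (T : G → (Lp ℂ ⊤ μ ≃ₗᵢ[ℂ] Lp ℂ ⊤ μ))
    (hT : ∀ (g : G) (f : Lp ℂ ⊤ μ),
      (T g f : Ω → ℂ) =ᵐ[μ] fun x => f ((α g).symm x))
    (F : Finset G) (a : G → Ω → ℂ)
    (Mop : G → (Lp ℂ ⊤ μ →L[ℂ] Lp ℂ ⊤ μ))
    (hMop : ∀ (g : G) (f : Lp ℂ ⊤ μ),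
      (Mop g f : Ω → ℂ) =ᵐ[μ] fun x => a g x * f x) :
    ‖∑ g ∈ F, (Mop g).comp
        ((T g).toContinuousLinearEquiv : Lp ℂ ⊤ μ →L[ℂ] Lp ℂ ⊤ μ)‖ =
      essSup (fun x => ∑ g ∈ F, ‖a g x‖) μ :=
  stmt6_general μ α hgrp hclass hfree T hT F a Mop hMop
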